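/- The inclusion of APCP-typable processes in AP-typable processes is strict: there exists a process P and context Γ such that P ⊢ Γ (AP) but P is not typable under ⊢ᴾ (APCP) for any priority annotation of Γ. In particular, the process (νxy)(νuw)(x(v,x'); send u[a,b] ∥ w(z,w'); send y[c,d]) is AP-typable but not APCP-typable. -/

import Mathlib

/-!
Typing the receive on `x` forces its priority below that of every other channel in its
continuation, in particular below the priority of `u`, on which the continuation sends; in the
same way the priority of `w` lies below that of `y`. Restriction gives dual types to `x, y` and
to `u, w`, and dual types have equal priorities, so `pr x < pr u = pr w < pr y = pr x`.
AP imposes no priority conditions, and with unit payloads the process is typable there.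
-/

/-- AP session types: A ::= A⊗B | A⅋B | ⊕{i:Aᵢ} | &{i:Aᵢ} | •.
Branches are given as lists; labels are list indices. -/
inductive SType : Type
  | tensor : SType → SType → SType
  | parr   : SType → SType → SType
  | oplus  : List SType → SType
  | amp    : List SType → SType
  | unit   : SType

/-- Duality of AP session types. -/
def SType.dual : SType → SType
  | .tensor A B => .parr A.dual B.dual
  | .parr A B   => .tensor A.dual B.dual
  | .oplus l    => .amp (l.attach.map (fun ⟨a, _⟩ => dual a))
  | .amp l      => .oplus (l.attach.map (fun ⟨a, _⟩ => dual a))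
  | .unit       => .unit
decreasing_by
  all_goals simp_wf
  all_goals try omega
  all_goals (rename_i ha; have := List.sizeOf_lt_of_mem ha; omega)

/-- APCP priority-annotated session types; priorities are natural numbers. -/
inductive PType : Type
  | tensor : ℕ → PType → PType → PType
  | parr   : ℕ → PType → PType → PType
  | oplus  : ℕ → List PType → PType
  | amp    : ℕ → List PType → PType
  | unit   : PType

/-- Duality of APCP session types (priorities must match exactly). -/
def PType.dual : PType → PType
  | .tensor π A B => .parr π A.dual B.dual
  | .parr π A B   => .tensor π A.dual B.dual
  | .oplus π l    => .amp π (l.attach.map (fun ⟨a, _⟩ => dual a))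
  | .amp π l      => .oplus π (l.attach.map (fun ⟨a, _⟩ => dual a))
  | .unit         => .unit
decreasing_by
  all_goals simp_wf
  all_goals try omega
  all_goals (rename_i ha; have := List.sizeOf_lt_of_mem ha; omega)

/-- The priority of a type: the annotation of the outermost connective, with pr(•) = ω.
Priorities live in ℕ ∪ {ω}, modeled as `WithTop ℕ` (ω = ⊤). -/
def PType.pr : PType → WithTop ℕ
  | .tensor π _ _ => (π : WithTop ℕ)
  | .parr π _ _   => (π : WithTop ℕ)
  | .oplus π _    => (π : WithTop ℕ)
  | .amp π _      => (π : WithTop ℕ)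
  | .unit         => ⊤

/-- AP processes. Names are natural numbers; branch continuations are lists
(labels are list indices). -/
inductive Proc : Type
  | send : ℕ → ℕ → ℕ → Proc                 -- send x[a,b]
  | recv : ℕ → ℕ → ℕ → Proc → Proc          -- x(y,z);P
  | sel  : ℕ → ℕ → ℕ → Proc                 -- x[b] ◁ j
  | bra  : ℕ → ℕ → List Proc → Proc         -- x(z) ▷ {i : Pᵢ}
  | par  : Proc → Proc → Proc               -- P ∥ Q
  | res  : ℕ → ℕ → Proc → Proc              -- (νxy)P
  | nil  : Proc                             -- 0
  | fwd  : ℕ → ℕ → Proc                     -- [x↔y]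

/-- Free names of a process. -/
def Proc.fn : Proc → Finset ℕ
  | .send x a b   => {x, a, b}
  | .recv x y z P => insert x ((P.fn.erase y).erase z)
  | .sel x b _    => {x, b}
  | .bra x z Ps   =>
      insert x (((Ps.attach.map (fun (q : {R // R ∈ Ps}) => match q with | ⟨R, _⟩ => Proc.fn R)).foldr (· ∪ ·) ∅).erase z)
  | .par P Q      => P.fn ∪ Q.fn
  | .res x y P    => (P.fn.erase x).erase y
  | .nil          => ∅
  | .fwd x y      => {x, y}
decreasing_by
  all_goals simp_wf
  all_goals try omega
  all_goals (rename_i ha; have := List.sizeOf_lt_of_mem ha; omega)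

/-- Substitution `P.subst x y` is P{x/y}: replace free occurrences of y by x
(naive; binders shadow). -/
def Proc.subst (x y : ℕ) : Proc → Proc
  | .send c a b   => .send (if c = y then x else c) (if a = y then x else a)
                       (if b = y then x else b)
  | .recv c v w P => .recv (if c = y then x else c) v w
                       (if v = y ∨ w = y then P else P.subst x y)
  | .sel c b j    => .sel (if c = y then x else c) (if b = y then x else b) j
  | .bra c v Ps   => .bra (if c = y then x else c) v
                       (if v = y then Ps else Ps.attach.map (fun ⟨P, _⟩ => P.subst x y))
  | .par P Q      => .par (P.subst x y) (Q.subst x y)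
  | .res a b P    => .res a b (if a = y ∨ b = y then P else P.subst x y)
  | .nil          => .nil
  | .fwd a b      => .fwd (if a = y then x else a) (if b = y then x else b)
decreasing_by
  all_goals simp_wf
  all_goals try omega
  all_goals (rename_i ha; have := List.sizeOf_lt_of_mem ha; omega)

/-- Structural congruence of AP (the least congruence with α-conversion and the
axioms of the AP structural congruence). -/
inductive SC : Proc → Proc → Prop
  | refl (P) : SC P P
  | symm : SC P Q → SC Q P
  | trans : SC P Q → SC Q R → SC P R
  -- congruence rules
  | recv_cong : SC P Q → SC (.recv x y z P) (.recv x y z Q)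
  | bra_cong : ∀ (Ps Qs : List Proc) (h : Ps.length = Qs.length),
      (∀ i (hi : i < Ps.length), SC (Ps.get ⟨i, hi⟩) (Qs.get ⟨i, h ▸ hi⟩)) →
      SC (.bra x z Ps) (.bra x z Qs)
  | par_cong : SC P P' → SC Q Q' → SC (.par P Q) (.par P' Q')
  | res_cong : SC P Q → SC (.res x y P) (.res x y Q)
  -- α-conversion of bound names
  | alpha_res₁ : z ∉ P.fn → z ≠ y → SC (.res x y P) (.res z y (P.subst z x))
  | alpha_res₂ : z ∉ P.fn → z ≠ x → SC (.res x y P) (.res x z (P.subst z y))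
  | alpha_recv₁ : w ∉ P.fn → w ≠ z → w ≠ x → SC (.recv x y z P) (.recv x w z (P.subst w y))
  | alpha_recv₂ : w ∉ P.fn → w ≠ y → w ≠ x → SC (.recv x y z P) (.recv x y w (P.subst w z))
  | alpha_bra : ∀ (Ps : List Proc), (∀ P ∈ Ps, w ∉ Proc.fn P) → w ≠ x →
      SC (.bra x z Ps) (.bra x w (Ps.attach.map (fun ⟨P, _⟩ => P.subst w z)))
  -- axioms
  | par_unit : SC (.par P .nil) P
  | par_comm : SC (.par P Q) (.par Q P)
  | par_assoc : SC (.par P (.par Q R)) (.par (.par P Q) R)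
  | scope : x ∉ P.fn → y ∉ P.fn → SC (.par P (.res x y Q)) (.res x y (.par P Q))
  | res_comm : SC (.res x y (.res z w P)) (.res z w (.res x y P))
  | res_symm : SC (.res x y P) (.res y x P)
  | res_nil : SC (.res x y .nil) .nil
  | fwd_symm : SC (.fwd x y) (.fwd y x)
  | res_fwd : SC (.res x y (.fwd x y)) .nil

/-- Reduction of AP processes. -/
inductive Red : Proc → Proc → Prop
  | send_recv : Red (.res x y (.par (.send x a b) (.recv y a' b' Q)))
      ((Q.subst a a').subst b b')
  | sel_bra : ∀ (Qs : List Proc) (h : j < Qs.length),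
      Red (.res x y (.par (.sel x b j) (.bra y b' Qs)))
        ((Qs.get ⟨j, h⟩).subst b b')
  | fwd : y ≠ z → Red (.res x y (.par (.fwd x z) P)) (P.subst z y)
  | sc : SC P P' → Red P' Q' → SC Q' Q → Red P Q
  | res : Red P Q → Red (.res x y P) (.res x y Q)
  | par : Red P Q → Red (.par P R) (.par Q R)

/-- A typing context: a list of name–type assignments. -/
abbrev Ctx := List (ℕ × SType)

/-- The AP typing judgment P ⊢ Γ. -/
inductive Typed : Proc → Ctx → Prop
  | send : Typed (.send x a b) [(x, .tensor A B), (a, A.dual), (b, B.dual)]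
  | recv : Typed P ((y, A) :: (z, B) :: Γ) →
      Typed (.recv x y z P) ((x, .parr A B) :: Γ)
  | sel : ∀ (As : List SType) (h : j < As.length),
      Typed (.sel x b j) [(x, .oplus As), (b, (As.get ⟨j, h⟩).dual)]
  | bra : ∀ (Ps : List Proc) (As : List SType) (h : Ps.length = As.length),
      (∀ i (hi : i < Ps.length),
        Typed (Ps.get ⟨i, hi⟩) ((z, As.get ⟨i, h ▸ hi⟩) :: Γ)) →
      Typed (.bra x z Ps) ((x, .amp As) :: Γ)
  | weaken : Typed P Γ → Typed P ((x, .unit) :: Γ)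
  | par : Typed P Γ → Typed Q Δ → Typed (.par P Q) (Γ ++ Δ)
  | res : Typed P ((x, A) :: (y, A.dual) :: Γ) → Typed (.res x y P) Γ
  | nil : Typed .nil []
  | fwd : Typed (.fwd x y) [(x, A.dual), (y, A)]
  | exchange : Typed P Γ → Γ.Perm Δ → Typed P Δ

/-- An APCP typing context. -/
abbrev PCtx := List (ℕ × PType)

/-- The priority of a typing context: the least priority of its types (ω if empty). -/
def prCtx (Γ : PCtx) : WithTop ℕ := Γ.foldr (fun p m => min p.2.pr m) ⊤


/-- The APCP typing judgment P ⊢ᴾ Γ: the AP typing rules with priority conditions. -/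
inductive TypedP : Proc → PCtx → Prop
  | send : (π : ℕ) → (π : WithTop ℕ) < A.pr → (π : WithTop ℕ) < B.pr →
      TypedP (.send x a b) [(x, .tensor π A B), (a, A.dual), (b, B.dual)]
  | recv : (π : ℕ) → TypedP P ((y, A) :: (z, B) :: Γ) → (π : WithTop ℕ) < prCtx Γ →
      TypedP (.recv x y z P) ((x, .parr π A B) :: Γ)
  | sel : ∀ (π : ℕ) (As : List PType) (h : j < As.length),
      (π : WithTop ℕ) < (As.get ⟨j, h⟩).pr →
      TypedP (.sel x b j) [(x, .oplus π As), (b, (As.get ⟨j, h⟩).dual)]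
  | bra : ∀ (π : ℕ) (Ps : List Proc) (As : List PType) (h : Ps.length = As.length),
      (∀ i (hi : i < Ps.length),
        TypedP (Ps.get ⟨i, hi⟩) ((z, As.get ⟨i, h ▸ hi⟩) :: Γ)) →
      (π : WithTop ℕ) < prCtx Γ →
      TypedP (.bra x z Ps) ((x, .amp π As) :: Γ)
  | weaken : TypedP P Γ → TypedP P ((x, .unit) :: Γ)
  | par : TypedP P Γ → TypedP Q Δ → TypedP (.par P Q) (Γ ++ Δ)
  | res : TypedP P ((x, A) :: (y, A.dual) :: Γ) → TypedP (.res x y P) Γ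
  | nil : TypedP .nil []
  | fwd : TypedP (.fwd x y) [(x, A.dual), (y, A)]
  | exchange : TypedP P Γ → Γ.Perm Δ → TypedP P Δ

/-- Erasing priority annotations from an APCP type yields an AP/ACP type. -/
def PType.erase : PType → SType
  | .tensor _ A B => .tensor A.erase B.erase
  | .parr _ A B   => .parr A.erase B.erase
  | .oplus _ l    => .oplus (l.attach.map (fun ⟨a, _⟩ => erase a))
  | .amp _ l      => .amp (l.attach.map (fun ⟨a, _⟩ => erase a))
  | .unit         => .unit
decreasing_by
  all_goals simp_wf
  all_goals try omega
  all_goals (rename_i ha; have := List.sizeOf_lt_of_mem ha; omega)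

/-- Erasing priorities from a typing context. -/
def eraseCtx (Γ : PCtx) : Ctx := Γ.map (fun p => (p.1, p.2.erase))

/-- The cyclic-dependency process (νxy)(νuw)(x(v,x'); u[a,b] ∥ w(z,w'); y[c,d]),
with x=0, y=1, u=2, w=3, v=4, x'=5, z=6, w'=7, a=8, b=9, c=10, d=11. -/
def cyclicProc : Proc :=
  .res 0 1 (.res 2 3 (.par (.recv 0 4 5 (.send 2 8 9)) (.recv 3 6 7 (.send 1 10 11))))

/-- The context a:•, b:•, c:•, d:•. -/
def unitCtx : Ctx := [(8, .unit), (9, .unit), (10, .unit), (11, .unit)]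

/-- Weakening adds only unit entries and exchange only permutes, so the inversion lemmas below
hold up to this relation. -/
def LinearSubctx (Γ Δ : PCtx) : Prop :=
  ∀ p ∈ Γ, p.2 ≠ .unit → p ∈ Δ

namespace LinearSubctx

theorem of_subset {Γ Δ : PCtx} (h : Γ ⊆ Δ) : LinearSubctx Γ Δ := fun _ hp _ => h hp

theorem trans_subset {Γ Δ Θ : PCtx} (h : LinearSubctx Γ Δ) (hs : Δ ⊆ Θ) :
    LinearSubctx Γ Θ :=
  fun p hp hu => hs (h p hp hu)

theorem append_trans {Γ Δ Θ : PCtx} (L : PCtx) (h : LinearSubctx Γ (L ++ Δ))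
    (hΔ : LinearSubctx Δ Θ) : LinearSubctx Γ (L ++ Θ) := by
  intro p hp hu
  rcases List.mem_append.mp (h p hp hu) with hL | hΔp
  · exact List.mem_append_left _ hL
  · exact List.mem_append_right _ (hΔ p hΔp hu)

theorem nil_of_forall_unit {Γ Δ : PCtx} (h : LinearSubctx Γ Δ)
    (hΔ : ∀ p ∈ Δ, p.2 = .unit) : LinearSubctx Γ [] :=
  fun p hp hu => absurd (hΔ p (h p hp hu)) hu

end LinearSubctx

theorem PType.pr_dual (T : PType) : T.dual.pr = T.pr := by
  cases T <;> simp [PType.dual, PType.pr]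

theorem prCtx_le_of_mem {Γ : PCtx} {p : ℕ × PType} (h : p ∈ Γ) : prCtx Γ ≤ p.2.pr := by
  induction Γ with
  | nil => cases h
  | cons q Γ ih =>
    rcases List.mem_cons.mp h with rfl | h
    · exact min_le_left _ _
    · exact (min_le_right _ _).trans (ih h)

section Inversion

variable {Γ : PCtx}

theorem TypedP.inv_send {x a b : ℕ} (h : TypedP (.send x a b) Γ) :
    ∃ (π : ℕ) (A B : PType), (x, PType.tensor π A B) ∈ Γ := by
  generalize hq : Proc.send x a b = Q at h
  induction h with
  | send π =>
    cases hq
    exact ⟨π, _, _, List.mem_cons_self⟩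
  | weaken _ ih =>
    obtain ⟨π, A, B, hm⟩ := ih hq
    exact ⟨π, A, B, List.mem_cons_of_mem _ hm⟩
  | exchange _ hp ih =>
    obtain ⟨π, A, B, hm⟩ := ih hq
    exact ⟨π, A, B, hp.subset hm⟩
  | _ => cases hq

theorem TypedP.inv_recv {x y z : ℕ} {P : Proc} (h : TypedP (.recv x y z P) Γ) :
    ∃ (π : ℕ) (A B : PType) (Δ : PCtx), TypedP P ((y, A) :: (z, B) :: Δ) ∧
      (π : WithTop ℕ) < prCtx Δ ∧ (x, PType.parr π A B) ∈ Γ ∧ LinearSubctx Δ Γ := by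
  generalize hq : Proc.recv x y z P = Q at h
  induction h with
  | recv π hP hπ =>
    cases hq
    exact ⟨π, _, _, _, hP, hπ, List.mem_cons_self,
      LinearSubctx.of_subset (List.subset_cons_self _ _)⟩
  | weaken _ ih =>
    obtain ⟨π, A, B, Δ, hP, hπ, hm, hΔ⟩ := ih hq
    exact ⟨π, A, B, Δ, hP, hπ, List.mem_cons_of_mem _ hm,
      hΔ.trans_subset (List.subset_cons_self _ _)⟩
  | exchange _ hp ih =>
    obtain ⟨π, A, B, Δ, hP, hπ, hm, hΔ⟩ := ih hq
    exact ⟨π, A, B, Δ, hP, hπ, hp.subset hm, hΔ.trans_subset hp.subset⟩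
  | _ => cases hq

theorem TypedP.inv_par {P Q : Proc} (h : TypedP (.par P Q) Γ) :
    ∃ Γ₁ Γ₂, TypedP P Γ₁ ∧ TypedP Q Γ₂ ∧ LinearSubctx Γ₁ Γ ∧ LinearSubctx Γ₂ Γ := by
  generalize hq : Proc.par P Q = R at h
  induction h with
  | par h₁ h₂ =>
    cases hq
    exact ⟨_, _, h₁, h₂, LinearSubctx.of_subset (List.subset_append_left _ _),
      LinearSubctx.of_subset (List.subset_append_right _ _)⟩
  | weaken _ ih =>
    obtain ⟨Γ₁, Γ₂, h₁, h₂, hΓ₁, hΓ₂⟩ := ih hq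
    exact ⟨Γ₁, Γ₂, h₁, h₂, hΓ₁.trans_subset (List.subset_cons_self _ _),
      hΓ₂.trans_subset (List.subset_cons_self _ _)⟩
  | exchange _ hp ih =>
    obtain ⟨Γ₁, Γ₂, h₁, h₂, hΓ₁, hΓ₂⟩ := ih hq
    exact ⟨Γ₁, Γ₂, h₁, h₂, hΓ₁.trans_subset hp.subset, hΓ₂.trans_subset hp.subset⟩
  | _ => cases hq

theorem TypedP.inv_res {x y : ℕ} {P : Proc} (h : TypedP (.res x y P) Γ) :
    ∃ A Δ, TypedP P ((x, A) :: (y, A.dual) :: Δ) ∧ LinearSubctx Δ Γ := by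
  generalize hq : Proc.res x y P = Q at h
  induction h with
  | res hP =>
    cases hq
    exact ⟨_, _, hP, LinearSubctx.of_subset (List.Subset.refl _)⟩
  | weaken _ ih =>
    obtain ⟨A, Δ, hP, hΔ⟩ := ih hq
    exact ⟨A, Δ, hP, hΔ.trans_subset (List.subset_cons_self _ _)⟩
  | exchange _ hp ih =>
    obtain ⟨A, Δ, hP, hΔ⟩ := ih hq
    exact ⟨A, Δ, hP, hΔ.trans_subset hp.subset⟩
  | _ => cases hq

end Inversion

theorem TypedP.pr_lt_of_recv_send {x v x' u a b : ℕ} {Γ : PCtx} (hv : u ≠ v) (hx' : u ≠ x')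
    (h : TypedP (.recv x v x' (.send u a b)) Γ) :
    ∃ S T : PType, (x, S) ∈ Γ ∧ (u, T) ∈ Γ ∧ S ≠ .unit ∧ T ≠ .unit ∧ S.pr < T.pr := by
  obtain ⟨π, A, B, Δ, hsend, hπ, hx, hΔ⟩ := h.inv_recv
  obtain ⟨ρ, C, D, hu⟩ := hsend.inv_send
  have huΔ : (u, PType.tensor ρ C D) ∈ Δ := by simpa [hv, hx'] using hu
  exact ⟨_, _, hx, hΔ _ huΔ nofun, nofun, nofun, hπ.trans_le (prCtx_le_of_mem huΔ)⟩

theorem not_typedP_cyclicProc {Γ : PCtx} (hΓ : ∀ p ∈ Γ, p.2 = .unit) :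
    ¬ TypedP cyclicProc Γ := by
  intro h
  obtain ⟨A, Γ₀, h₀, hΓ₀⟩ := h.inv_res
  obtain ⟨C, Δ, h₁, hΔ⟩ := h₀.inv_res
  obtain ⟨Γ₁, Γ₂, hl, hr, hΓ₁, hΓ₂⟩ := h₁.inv_par
  have hΔ' : LinearSubctx Δ [(0, A), (1, A.dual)] := by
    simpa using hΔ.append_trans [(0, A), (1, A.dual)] (hΓ₀.nil_of_forall_unit hΓ)
  have hΓ₁' := hΓ₁.append_trans [(2, C), (3, C.dual)] hΔ'
  have hΓ₂' := hΓ₂.append_trans [(2, C), (3, C.dual)] hΔ'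
  obtain ⟨Tx, Tu, hx, hu, hTx_ne, hTu_ne, hxu⟩ := hl.pr_lt_of_recv_send (by decide) (by decide)
  obtain ⟨Tw, Ty, hw, hy, hTw_ne, hTy_ne, hwy⟩ := hr.pr_lt_of_recv_send (by decide) (by decide)
  have hTx : Tx = A := by simpa using hΓ₁' _ hx hTx_ne
  have hTu : Tu = C := by simpa using hΓ₁' _ hu hTu_ne
  have hTw : Tw = C.dual := by simpa using hΓ₂' _ hw hTw_ne
  have hTy : Ty = A.dual := by simpa using hΓ₂' _ hy hTy_ne
  rw [hTw, hTy, PType.pr_dual, PType.pr_dual, ← hTx, ← hTu] at hwy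
  exact hxu.asymm hwy

theorem PType.erase_eq_unit {T : PType} (h : T.erase = .unit) : T = .unit := by
  cases T <;> simp [PType.erase] at h ⊢

theorem forall_unit_of_eraseCtx {Γ : PCtx} (h : ∀ p ∈ eraseCtx Γ, p.2 = .unit) :
    ∀ p ∈ Γ, p.2 = .unit :=
  fun _ hp => PType.erase_eq_unit (h _ (List.mem_map_of_mem hp))

theorem typed_cyclicProc : Typed cyclicProc unitCtx := by
  have hsend (x a b : ℕ) :
      Typed (.send x a b) [(x, .tensor .unit .unit), (a, .unit), (b, .unit)] := by
    simpa only [SType.dual] using Typed.send (A := .unit) (B := .unit)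
  have hl : Typed (.recv 0 4 5 (.send 2 8 9))
      [(0, .parr .unit .unit), (2, .tensor .unit .unit), (8, .unit), (9, .unit)] :=
    .recv (.weaken (.weaken (hsend 2 8 9)))
  have hr : Typed (.recv 3 6 7 (.send 1 10 11))
      [(3, .parr .unit .unit), (1, .tensor .unit .unit), (10, .unit), (11, .unit)] :=
    .recv (.weaken (.weaken (hsend 1 10 11)))
  refine .res (A := .parr .unit .unit) (.res (A := .tensor .unit .unit) (.exchange (.par hl hr) ?_))
  simp only [SType.dual, unitCtx]
  exact List.perm_middle (l₁ := [_]) |>.trans <| .cons _ <|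
    List.perm_middle (l₁ := [_, _, _]) |>.trans <| .cons _ <| .cons _ <|
      List.perm_middle (l₁ := [_, _])

/-- The cyclic-dependency process is AP-typable but not APCP-typable under any
priority annotation of its context: the inclusion ⊢ᴾ ⊂ ⊢ is strict. -/
theorem ap_not_apcp :
    Typed cyclicProc unitCtx ∧
    ∀ Γ' : PCtx, eraseCtx Γ' = unitCtx → ¬ TypedP cyclicProc Γ' :=
  ⟨typed_cyclicProc, fun _ he =>
    not_typedP_cyclicProc (forall_unit_of_eraseCtx (by simp [he, unitCtx]))⟩
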